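/- Let μ be a nonzero positive measure with compact support contained in [d₀, d], 0 < d₀ < d < ∞, K its Cauchy transform, and ε > 0. Then for all sufficiently large n, all zeros of H_n(z) = z² + ε n² z + n² − n² K(z) are real. Consequently the set ⋃_n {zeros of H_n} contains only finitely many non-real points. -/

import Mathlib

/-!
A non-real zero `z = x + iy` of `H_n` solves `z² + a z + b = c K(z)` with `a = εn²`, `b = c = n²`,
and so does `z̄`. Subtracting this equation at two distinct solutions `u, v` and using the
resolvent identity gives `u + v + a = -c ∫ dν(t) / ((u + t)(v + t))`; for the pair `(z, z̄)` this
reads `2x + a = -c ∫ |z + t|⁻² dν(t)`.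

Hence `x ≤ -εn²/2` lies far to the left of the support, so `K(z)` and the last integral are
`O(n⁻²)`, and the real part of the equation forces `y² ≤ 0` once `n` is large.

If `u, v` are solutions in the same half-plane, the identities for the pairs `(u, ū)`, `(u, v)`,
`(v̄, ū)`, `(v̄, v)` telescope to `∫ |(u + t)⁻¹ - (v̄ + t)⁻¹|² dν = 0`; then the pairs `(u, v)` and
`(v̄, v)` give `u = v̄`, which is impossible. So each `H_n` has at most two non-real zeros.
-/

open MeasureTheory Complex Filter Topology ComplexConjugate

namespace Complex

variable {z : ℂ}

lemma ne_conj_of_im_ne_zero (hz : z.im ≠ 0) : z ≠ conj z := fun h =>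
  hz (conj_eq_iff_im.mp h.symm)

lemma add_ofReal_ne_zero (hz : z.im ≠ 0) (t : ℝ) : z + t ≠ 0 := fun h =>
  hz (by simpa using congrArg im h)

lemma norm_inv_add_ofReal_le (hz : z.im ≠ 0) (t : ℝ) : ‖(z + t)⁻¹‖ ≤ |z.im|⁻¹ := by
  rw [norm_inv]
  exact inv_anti₀ (abs_pos.mpr hz) (by simpa using abs_im_le_norm (z + t))

lemma continuous_inv_add_ofReal (hz : z.im ≠ 0) : Continuous fun t : ℝ => (z + t)⁻¹ :=
  (continuous_const.add continuous_ofReal).inv₀ (add_ofReal_ne_zero hz)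

end Complex

noncomputable def cauchyTransform (ν : Measure ℝ) (z : ℂ) : ℂ := ∫ t, (z + t)⁻¹ ∂ν

namespace cauchyTransform

variable {ν : Measure ℝ} {z u v : ℂ}

lemma conj_apply (z : ℂ) : cauchyTransform ν (conj z) = conj (cauchyTransform ν z) := by
  simp only [cauchyTransform, ← integral_conj, map_inv₀, map_add, conj_ofReal]

lemma apply_eq_zero_of_not_isFiniteMeasure {r : ℝ} (hr : ∀ᵐ t ∂ν, |t| ≤ r)
    (hfin : ¬ IsFiniteMeasure ν) (hz : z.im ≠ 0) : cauchyTransform ν z = 0 := by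
  refine integral_undef fun hint => hfin ?_
  have hpos : 0 < ‖z‖ + |r| := by
    have : z ≠ 0 := fun h => hz (by rw [h, zero_im])
    positivity
  have hlower : ∀ᵐ t : ℝ ∂ν, ‖(‖z‖ + |r|)⁻¹‖ ≤ ‖(z + t)⁻¹‖ := by
    filter_upwards [hr] with t ht
    have hle : ‖z + t‖ ≤ ‖z‖ + |r| := (norm_add_le _ _).trans (by
      simpa using le_trans ht (le_abs_self r))
    rw [Real.norm_of_nonneg (inv_nonneg.mpr hpos.le), norm_inv]
    exact inv_anti₀ (norm_pos_iff.mpr (add_ofReal_ne_zero hz t)) hle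
  rcases integrable_const_iff.mp (hint.mono aestronglyMeasurable_const hlower) with h | h
  · exact absurd h (inv_ne_zero hpos.ne')
  · exact h

/-- For an infinite `ν` the Bochner integral defining the transform takes the junk value `0`, which
is the transform of the zero measure. -/
lemma exists_isFiniteMeasure_eq {d₀ d : ℝ} (hν : ∀ᵐ t ∂ν, t ∈ Set.Icc d₀ d) :
    ∃ ν' : Measure ℝ, IsFiniteMeasure ν' ∧ (∀ᵐ t ∂ν', t ≤ d) ∧
      ∀ z : ℂ, z.im ≠ 0 → cauchyTransform ν z = cauchyTransform ν' z := by
  by_cases hfin : IsFiniteMeasure ν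
  · exact ⟨ν, hfin, hν.mono fun t ht => ht.2, fun z _ => rfl⟩
  · refine ⟨0, inferInstance, by simp, fun z hz => ?_⟩
    rw [apply_eq_zero_of_not_isFiniteMeasure (hν.mono fun t ht => abs_le_max_abs_abs ht.1 ht.2)
      hfin hz, cauchyTransform, integral_zero_measure]

variable [IsFiniteMeasure ν]

lemma integrable_inv_add_ofReal (hz : z.im ≠ 0) : Integrable (fun t : ℝ => (z + t)⁻¹) ν :=
  (integrable_const |z.im|⁻¹).mono' (continuous_inv_add_ofReal hz).aestronglyMeasurable
    (ae_of_all _ (norm_inv_add_ofReal_le hz))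

lemma integrable_inv_add_mul_inv_add (hu : u.im ≠ 0) (hv : v.im ≠ 0) :
    Integrable (fun t : ℝ => (u + t)⁻¹ * (v + t)⁻¹) ν :=
  (integrable_inv_add_ofReal hv).bdd_mul (continuous_inv_add_ofReal hu).aestronglyMeasurable
    (ae_of_all _ (norm_inv_add_ofReal_le hu))

lemma sub_apply (hu : u.im ≠ 0) (hv : v.im ≠ 0) :
    cauchyTransform ν u - cauchyTransform ν v = (v - u) * ∫ t, (u + t)⁻¹ * (v + t)⁻¹ ∂ν := by
  rw [cauchyTransform, cauchyTransform, ← integral_sub (integrable_inv_add_ofReal hu)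
    (integrable_inv_add_ofReal hv), ← integral_const_mul]
  congr 1 with t
  have := add_ofReal_ne_zero hu t
  have := add_ofReal_ne_zero hv t
  field_simp
  ring

end cauchyTransform

def IsCharRoot (ν : Measure ℝ) (a b c : ℝ) (z : ℂ) : Prop :=
  z ^ 2 + a * z + b = c * cauchyTransform ν z

namespace IsCharRoot

open cauchyTransform

variable {ν : Measure ℝ} {a b c : ℝ} {z u v : ℂ}

lemma map_conj (h : IsCharRoot ν a b c z) : IsCharRoot ν a b c (conj z) := by
  unfold IsCharRoot at h ⊢
  rw [conj_apply]
  simpa using congrArg conj h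

variable [IsFiniteMeasure ν]

lemma add_add_eq (hu : IsCharRoot ν a b c u) (hv : IsCharRoot ν a b c v) (hu₀ : u.im ≠ 0)
    (hv₀ : v.im ≠ 0) (huv : u ≠ v) :
    u + v + a = -c * ∫ t, (u + t)⁻¹ * (v + t)⁻¹ ∂ν := by
  refine mul_left_cancel₀ (sub_ne_zero.mpr huv) ?_
  have := sub_apply (ν := ν) hu₀ hv₀
  unfold IsCharRoot at hu hv
  linear_combination hu - hv + c * this

lemma two_mul_re_add_eq (h : IsCharRoot ν a b c z) (hz : z.im ≠ 0) :
    2 * z.re + a = -c * ∫ t, normSq (z + t)⁻¹ ∂ν := by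
  have hconj : (conj z).im ≠ 0 := by simpa using hz
  have key := h.add_add_eq h.map_conj hz hconj (ne_conj_of_im_ne_zero hz)
  have hprod : ∀ t : ℝ, (z + t)⁻¹ * (conj z + t)⁻¹ = (normSq (z + t)⁻¹ : ℂ) := fun t => by
    rw [← mul_conj, map_inv₀, map_add, conj_ofReal]
  simp only [hprod, integral_complex_ofReal] at key
  have := congrArg re key
  simp only [add_re, conj_re, ofReal_re, neg_mul, neg_re, re_ofReal_mul] at this
  linarith

lemma ae_inv_add_eq_inv_add_conj (hc : c ≠ 0) (h₁ : IsCharRoot ν a b c u)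
    (h₂ : IsCharRoot ν a b c v) (hu : u.im ≠ 0) (hv : v.im ≠ 0) (huv : u ≠ v) :
    (fun t : ℝ => (u + t)⁻¹) =ᵐ[ν] fun t => (conj v + t)⁻¹ := by
  have hu' : (conj u).im ≠ 0 := by simpa using hu
  have hv' : (conj v).im ≠ 0 := by simpa using hv
  have e₁ := h₁.add_add_eq h₁.map_conj hu hu' (ne_conj_of_im_ne_zero hu)
  have e₂ := h₁.add_add_eq h₂ hu hv huv
  have e₃ := h₂.map_conj.add_add_eq h₁.map_conj hv' hu' fun h =>
    huv (by simpa using congrArg conj h.symm)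
  have e₄ := h₂.map_conj.add_add_eq h₂ hv' hv (ne_conj_of_im_ne_zero hv).symm
  set f : ℝ → ℂ := fun t => (u + t)⁻¹ - (conj v + t)⁻¹
  have hprod : ∀ t : ℝ, (normSq (f t) : ℂ) = (u + t)⁻¹ * (conj u + t)⁻¹ - (u + t)⁻¹ * (v + t)⁻¹
      - ((conj v + t)⁻¹ * (conj u + t)⁻¹ - (conj v + t)⁻¹ * (v + t)⁻¹) := fun t => by
    rw [← mul_conj]
    simp only [f, map_sub, map_inv₀, map_add, conj_ofReal, conj_conj]
    ring
  have i₁ := integrable_inv_add_mul_inv_add (ν := ν) hu hu'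
  have i₂ := integrable_inv_add_mul_inv_add (ν := ν) hu hv
  have i₃ := integrable_inv_add_mul_inv_add (ν := ν) hv' hu'
  have i₄ := integrable_inv_add_mul_inv_add (ν := ν) hv' hv
  have hint : Integrable (fun t => normSq (f t)) ν := by
    have hintC : Integrable (fun t => (normSq (f t) : ℂ)) ν := by
      simp only [hprod]
      exact (i₁.sub i₂).sub (i₃.sub i₄)
    simpa only [RCLike.re_to_complex, ofReal_re] using hintC.re
  have hzero : ∫ t, normSq (f t) ∂ν = 0 := by
    refine ofReal_injective (mul_left_cancel₀ (ofReal_ne_zero.mpr hc) ?_)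
    rw [← integral_complex_ofReal, ofReal_zero, mul_zero]
    simp only [hprod]
    rw [integral_sub ?_ ?_, integral_sub i₁ i₂, integral_sub i₃ i₄]
    · linear_combination e₁ - e₂ - e₃ + e₄
    exacts [i₁.sub i₂, i₃.sub i₄]
  filter_upwards [(integral_eq_zero_iff_of_nonneg (fun t => normSq_nonneg _) hint).mp hzero]
    with t ht
  exact sub_eq_zero.mp (normSq_eq_zero.mp ht)

lemma eq_of_im_mul_pos (hc : c ≠ 0) (h₁ : IsCharRoot ν a b c u) (h₂ : IsCharRoot ν a b c v)
    (hsign : 0 < u.im * v.im) : u = v := by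
  have hu : u.im ≠ 0 := left_ne_zero_of_mul hsign.ne'
  have hv : v.im ≠ 0 := right_ne_zero_of_mul hsign.ne'
  by_contra huv
  have hJ : ∫ t : ℝ, (u + t)⁻¹ * (v + t)⁻¹ ∂ν = ∫ t : ℝ, (conj v + t)⁻¹ * (v + t)⁻¹ ∂ν :=
    integral_congr_ae ((ae_inv_add_eq_inv_add_conj hc h₁ h₂ hu hv huv).mul EventuallyEq.rfl)
  have e₂ := h₁.add_add_eq h₂ hu hv huv
  have e₄ := h₂.map_conj.add_add_eq h₂ (by simpa using hv) hv (ne_conj_of_im_ne_zero hv).symm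
  have hu_eq : u = conj v := by linear_combination e₂ - e₄ - c * hJ
  have him : u.im = -v.im := by simpa using congrArg im hu_eq
  rw [him, neg_mul] at hsign
  linarith [mul_self_nonneg v.im]

lemma finite_setOf_im_ne_zero (hc : c ≠ 0) : {z : ℂ | z.im ≠ 0 ∧ IsCharRoot ν a b c z}.Finite := by
  have hupper : {z : ℂ | 0 < z.im ∧ IsCharRoot ν a b c z}.Subsingleton :=
    fun u hu v hv => eq_of_im_mul_pos hc hu.2 hv.2 (mul_pos hu.1 hv.1)
  have hlower : {z : ℂ | z.im < 0 ∧ IsCharRoot ν a b c z}.Subsingleton :=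
    fun u hu v hv => eq_of_im_mul_pos hc hu.2 hv.2 (mul_pos_of_neg_of_neg hu.1 hv.1)
  refine (hupper.finite.union hlower.finite).subset fun z ⟨hz, hroot⟩ => ?_
  rcases hz.lt_or_gt with h | h
  exacts [Or.inr ⟨h, hroot⟩, Or.inl ⟨h, hroot⟩]

lemma im_eq_zero_of_le {d : ℝ} (hd : ∀ᵐ t ∂ν, t ≤ d) (hc : 0 ≤ c) (hR : 0 < a / 2 - d)
    (hbound : c ^ 2 * (ν.real Set.univ / (a / 2 - d) ^ 2) ^ 2
      + 4 * (b + c * (ν.real Set.univ / (a / 2 - d))) ≤ a ^ 2)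
    (h : IsCharRoot ν a b c z) : z.im = 0 := by
  by_contra hz
  set R := a / 2 - d
  set M := ν.real Set.univ
  set I := ∫ t, normSq (z + t)⁻¹ ∂ν
  have hIeq : 2 * z.re + a = -c * I := h.two_mul_re_add_eq hz
  have hI₀ : 0 ≤ I := integral_nonneg fun t => normSq_nonneg _
  have hx : 2 * z.re + a ≤ 0 := by
    rw [hIeq, neg_mul]
    exact neg_nonpos.mpr (mul_nonneg hc hI₀)
  have hfar : ∀ᵐ t : ℝ ∂ν, ‖(z + t)⁻¹‖ ≤ R⁻¹ := by
    filter_upwards [hd] with t ht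
    rw [norm_inv]
    refine inv_anti₀ hR ?_
    calc R ≤ -(z + t).re := by simp only [add_re, ofReal_re, R]; linarith
      _ ≤ ‖z + t‖ := (neg_le_abs _).trans (abs_re_le_norm _)
  have hI : I ≤ M / R ^ 2 := by
    have hbd : ∀ᵐ t : ℝ ∂ν, ‖normSq (z + t)⁻¹‖ ≤ (R⁻¹) ^ 2 := by
      filter_upwards [hfar] with t ht
      rw [Real.norm_of_nonneg (normSq_nonneg _), normSq_eq_norm_sq]
      exact pow_le_pow_left₀ (norm_nonneg _) ht 2
    calc I ≤ ‖I‖ := Real.le_norm_self I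
      _ ≤ (R⁻¹) ^ 2 * M := norm_integral_le_of_norm_le_const hbd
      _ = M / R ^ 2 := by field_simp
  have hreK : -(c * (cauchyTransform ν z).re) ≤ c * (M / R) := by
    have hnorm : ‖cauchyTransform ν z‖ ≤ R⁻¹ * M := norm_integral_le_of_norm_le_const hfar
    have hre : -(cauchyTransform ν z).re ≤ M / R :=
      ((neg_le_abs _).trans (abs_re_le_norm _)).trans (hnorm.trans_eq (by field_simp))
    nlinarith
  have hreal : z.re ^ 2 - z.im ^ 2 + a * z.re + b = c * (cauchyTransform ν z).re := by
    simpa [pow_two] using congrArg re h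
  have hcI : (c * I) ^ 2 ≤ (c * (M / R ^ 2)) ^ 2 :=
    pow_le_pow_left₀ (mul_nonneg hc hI₀) (mul_le_mul_of_nonneg_left hI hc) 2
  have hy : 0 < z.im ^ 2 := by positivity
  have hsq : 4 * z.im ^ 2 = (c * I) ^ 2 - a ^ 2 + 4 * b - 4 * (c * (cauchyTransform ν z).re) := by
    linear_combination (2 * z.re + a - c * I) * hIeq - 4 * hreal
  linarith

lemma eventually_im_eq_zero {d ε : ℝ} (hd : ∀ᵐ t ∂ν, t ≤ d) (hε : 0 < ε) :
    ∀ᶠ n : ℕ in atTop, ∀ z, IsCharRoot ν (ε * n ^ 2) (n ^ 2) (n ^ 2) z → z.im = 0 := by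
  set M := ν.real Set.univ
  have hsq : Tendsto (fun n : ℕ => (n : ℝ) ^ 2) atTop atTop :=
    (tendsto_pow_atTop two_ne_zero).comp tendsto_natCast_atTop_atTop
  have hR : Tendsto (fun n : ℕ => ε * (n : ℝ) ^ 2 / 2 - d) atTop atTop := by
    refine tendsto_atTop_add_const_right _ _ ?_
    simpa only [mul_div_right_comm] using hsq.const_mul_atTop (half_pos hε)
  have hsmall : Tendsto (fun n : ℕ => (M * ((ε * (n : ℝ) ^ 2 / 2 - d)⁻¹) ^ 2) ^ 2
      + 4 * (1 + M * (ε * (n : ℝ) ^ 2 / 2 - d)⁻¹) * ((n : ℝ) ^ 2)⁻¹) atTop (𝓝 0) := by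
    have hRinv := hR.inv_tendsto_atTop
    simpa using (((hRinv.pow 2).const_mul M).pow 2).add
      ((((hRinv.const_mul M).const_add 1).const_mul 4).mul hsq.inv_tendsto_atTop)
  filter_upwards [hR.eventually_gt_atTop 0, hsmall.eventually (gt_mem_nhds (pow_pos hε 2)),
    eventually_ne_atTop 0] with n hRpos hlt hn z hz
  refine hz.im_eq_zero_of_le hd (by positivity) hRpos ?_
  calc _ = ((n : ℝ) ^ 2) ^ 2 * ((M * ((ε * (n : ℝ) ^ 2 / 2 - d)⁻¹) ^ 2) ^ 2
        + 4 * (1 + M * (ε * (n : ℝ) ^ 2 / 2 - d)⁻¹) * ((n : ℝ) ^ 2)⁻¹) := by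
        field_simp
        ring
      _ ≤ ((n : ℝ) ^ 2) ^ 2 * ε ^ 2 := by gcongr
      _ = (ε * n ^ 2) ^ 2 := by ring

end IsCharRoot

theorem KV_finitely_many_nonreal_zeros_general
    (μ : Measure ℝ) (d₀ d : ℝ)
    (hsupp : μ (Set.Icc d₀ d)ᶜ = 0)
    (K : ℂ → ℂ) (hK : ∀ z, K z = ∫ t in Set.Ioi (0 : ℝ), (z + (t : ℂ))⁻¹ ∂μ)
    (ε : ℝ) (hε : 0 < ε)
    (H : ℕ → ℂ → ℂ)
    (hH : ∀ n z, H n z = z ^ 2 + (ε : ℂ) * (n : ℂ) ^ 2 * z + (n : ℂ) ^ 2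
        - (n : ℂ) ^ 2 * K z) :
    (∃ N : ℕ, ∀ n : ℕ, N ≤ n → ∀ z : ℂ, H n z = 0 → z.im = 0) ∧
    {z : ℂ | z.im ≠ 0 ∧ ∃ n : ℕ, 1 ≤ n ∧ H n z = 0}.Finite := by
  obtain ⟨ν, hνfin, hνd, hKν⟩ := cauchyTransform.exists_isFiniteMeasure_eq
    (ν := μ.restrict (Set.Ioi 0)) (ae_restrict_of_ae (mem_ae_iff.mpr hsupp))
  have hroot : ∀ n z, z.im ≠ 0 → H n z = 0 → IsCharRoot ν (ε * n ^ 2) (n ^ 2) (n ^ 2) z := by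
    intro n z hz h
    rw [hH, (hK z).trans (hKν z hz), sub_eq_zero] at h
    unfold IsCharRoot
    push_cast
    exact h
  obtain ⟨N, hN⟩ := eventually_atTop.mp (IsCharRoot.eventually_im_eq_zero hνd hε)
  have hreal : ∀ n, N ≤ n → ∀ z, H n z = 0 → z.im = 0 :=
    fun n hn z h => by_contra fun hz => hz (hN n hn z (hroot n z hz h))
  refine ⟨⟨N, hreal⟩, ((Set.finite_Ico 1 N).biUnion fun n hn =>
    IsCharRoot.finite_setOf_im_ne_zero (ν := ν) (a := ε * n ^ 2) (b := n ^ 2)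
      (pow_ne_zero 2 (Nat.cast_ne_zero.mpr (Nat.one_le_iff_ne_zero.mp hn.1)))).subset ?_⟩
  rintro z ⟨hz, n, hn, h⟩
  exact Set.mem_biUnion ⟨hn, lt_of_not_ge fun hNn => hz (hreal n hNn z h)⟩ ⟨hz, hroot n z hz h⟩

theorem KV_finitely_many_nonreal_zeros
    (μ : Measure ℝ) (hμ : μ ≠ 0) (d₀ d : ℝ) (hd₀ : 0 < d₀) (hd : d₀ < d)
    (hsupp : μ (Set.Icc d₀ d)ᶜ = 0)
    (K : ℂ → ℂ) (hK : ∀ z, K z = ∫ t in Set.Ioi (0 : ℝ), (z + (t : ℂ))⁻¹ ∂μ)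
    (ε : ℝ) (hε : 0 < ε)
    (H : ℕ → ℂ → ℂ)
    (hH : ∀ n z, H n z = z ^ 2 + (ε : ℂ) * (n : ℂ) ^ 2 * z + (n : ℂ) ^ 2
        - (n : ℂ) ^ 2 * K z) :
    (∃ N : ℕ, ∀ n : ℕ, N ≤ n → ∀ z : ℂ, H n z = 0 → z.im = 0) ∧
    {z : ℂ | z.im ≠ 0 ∧ ∃ n : ℕ, 1 ≤ n ∧ H n z = 0}.Finite :=
  KV_finitely_many_nonreal_zeros_general μ d₀ d hsupp K hK ε hε H hH
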